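/- Let (A,[·,·],α) be a multiplicative Hom-Leibniz algebra over a field K. Then there exists a compatible multiplicative Hom-Leibniz dendriform algebra structure on A (i.e. bilinear maps ≺,≻: A×A→A with x≺y + x≻y = [x,y] for all x,y, such that (A,≺,≻,α) is a Hom-Leibniz dendriform algebra with α(x≺y) = α(x)≺α(y) and α(x≻y) = α(x)≻α(y)) if and only if there exist a bimodule (l,r,β,V) of (A,[·,·],α) and an invertible O-operator T: V→A associated to (l,r,β,V). -/
import Mathlib


/-- A Hom-Leibniz algebra structure. -/
def HomLeibniz {K A : Type*} [Field K] [AddCommGroup A] [Module K A]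
    (br : A →ₗ[K] A →ₗ[K] A) (α : A →ₗ[K] A) : Prop :=
  ∀ x y z : A, br (α x) (br y z) = br (br x y) (α z) + br (α y) (br x z)

/-- A bimodule `(l, r, β, V)` of a Hom-Leibniz algebra `(A, br, α)`. -/
def HomLeibnizBimodule {K A V : Type*} [Field K] [AddCommGroup A] [Module K A]
    [AddCommGroup V] [Module K V]
    (br : A →ₗ[K] A →ₗ[K] A) (α : A →ₗ[K] A)
    (l r : A →ₗ[K] V →ₗ[K] V) (β : V →ₗ[K] V) : Prop :=
  (∀ x y v, l (α x) (l y v) = l (br x y) (β v) + l (α y) (l x v)) ∧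
  (∀ x y v, l (α x) (r y v) = r (α y) (l x v) + r (br x y) (β v)) ∧
  (∀ x y v, r (br x y) (β v) = r (α y) (r x v) + l (α x) (r y v)) ∧
  (∀ x v, β (l x v) = l (α x) (β v)) ∧
  (∀ x v, β (r x v) = r (α x) (β v))

/-- A Hom-Leibniz dendriform algebra `(A, ≺, ≻, α)`, with `p = ≺` and `s = ≻`
and `[x,y] = x≺y + x≻y`. -/
def HomLeibnizDendriform {K A : Type*} [Field K] [AddCommGroup A] [Module K A]
    (p s : A →ₗ[K] A →ₗ[K] A) (α : A →ₗ[K] A) : Prop :=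
  (∀ x y z : A, s (p x y + s x y) (α z) = s (α x) (s y z) - s (α y) (s x z)) ∧
  (∀ x y z : A, s (α x) (p y z) = p (s x y) (α z) + p (α y) (p x z + s x z)) ∧
  (∀ x y z : A, p (α x) (p y z + s y z) = p (p x y) (α z) + s (α y) (p x z))

/-- An `𝒪`-operator `T : V → A` associated to a bimodule `(l, r, β, V)` of a
Hom-Leibniz algebra `(A, br, α)`. -/
def OOperator {K A V : Type*} [Field K] [AddCommGroup A] [Module K A]
    [AddCommGroup V] [Module K V]
    (br : A →ₗ[K] A →ₗ[K] A) (α : A →ₗ[K] A)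
    (l r : A →ₗ[K] V →ₗ[K] V) (β : V →ₗ[K] V) (T : V →ₗ[K] A) : Prop :=
  (∀ v : V, α (T v) = T (β v)) ∧
  (∀ u v : V, br (T u) (T v) = T (l (T u) v + r (T v) u))

universe u v

/-- a multiplicative Hom-Leibniz algebra admits a compatible
multiplicative Hom-Leibniz dendriform algebra structure if and only if there
exists an invertible `𝒪`-operator on some bimodule. -/
theorem compatible_dendriform_iff_invertible_oOperator
    {K : Type u} {A : Type v} [Field K] [AddCommGroup A] [Module K A]
    (br : A →ₗ[K] A →ₗ[K] A) (α : A →ₗ[K] A)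
    (hA : HomLeibniz br α)
    (hmul : ∀ x y : A, α (br x y) = br (α x) (α y)) :
    (∃ p s : A →ₗ[K] A →ₗ[K] A,
        (∀ x y : A, p x y + s x y = br x y) ∧
        HomLeibnizDendriform p s α ∧
        (∀ x y : A, α (p x y) = p (α x) (α y)) ∧
        (∀ x y : A, α (s x y) = s (α x) (α y)))
    ↔
    (∃ (V : Type v) (_ : AddCommGroup V) (_ : Module K V)
        (l r : A →ₗ[K] V →ₗ[K] V) (β : V →ₗ[K] V) (T : V →ₗ[K] A),
        HomLeibnizBimodule br α l r β ∧
        OOperator br α l r β T ∧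
        Function.Bijective T) := by
  
  constructor
  · rintro ⟨p, s, hcomp, ⟨D1, D2, D3⟩, hp, hs⟩
    refine ⟨A, inferInstance, inferInstance, s, p.flip, α, LinearMap.id, ⟨?_, ?_, ?_, ?_, ?_⟩,
      ⟨?_, ?_⟩, Function.bijective_id⟩
    · intro x y v
      have h := D1 x y v
      rw [hcomp] at h
      simp only [h]
      abel
    · intro x y v
      have h := D2 x v y
      rw [hcomp] at h
      simpa using h
    · intro x y v
      have h := D3 v x y
      rw [hcomp] at h
      simpa using h
    · intro x v; simpa using hs x v
    · intro x v; simpa using hp v x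
    · intro v; simp
    · intro u v
      simp only [LinearMap.id_coe, id_eq, LinearMap.flip_apply]
      rw [← hcomp u v]
      abel
  · rintro ⟨V, _, _, l, r, β, T, ⟨B1, B2, B3, B4, B5⟩, ⟨O1, O2⟩, hbij⟩
    let e : V ≃ₗ[K] A := LinearEquiv.ofBijective T hbij
    have hTe : ∀ w : V, T w = e w := fun w => rfl
    have hTS : ∀ x : A, T (e.symm x) = x := fun x => by
      rw [hTe]; exact e.apply_symm_apply x
    have hST : ∀ w : V, e.symm (T w) = w := fun w => by
      rw [hTe]; exact e.symm_apply_apply w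
    have hβS : ∀ x : A, β (e.symm x) = e.symm (α x) := fun x => by
      apply e.injective
      rw [← hTe, ← hTe, ← O1, hTS, hTS]
    let p : A →ₗ[K] A →ₗ[K] A :=
      LinearMap.mk₂ K (fun x y => T (r y (e.symm x)))
        (fun x x' y => by simp) (fun c x y => by simp)
        (fun x y y' => by simp) (fun c x y => by simp)
    let s : A →ₗ[K] A →ₗ[K] A :=
      LinearMap.mk₂ K (fun x y => T (l x (e.symm y)))
        (fun x x' y => by simp) (fun c x y => by simp)
        (fun x y y' => by simp) (fun c x y => by simp)
    have hps : ∀ x y : A, p x y = T (r y (e.symm x)) := fun _ _ => rfl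
    have hss : ∀ x y : A, s x y = T (l x (e.symm y)) := fun _ _ => rfl
    have hcomp : ∀ x y : A, p x y + s x y = br x y := by
      intro x y
      have := O2 (e.symm x) (e.symm y)
      rw [hTS, hTS] at this
      rw [hps, hss, this, map_add]
      abel
    refine ⟨p, s, hcomp, ⟨?_, ?_, ?_⟩, ?_, ?_⟩
    · intro x y z
      rw [hcomp]
      simp only [hss, hST]
      rw [← map_sub]
      congr 1
      rw [← hβS]
      have h := B1 x y (e.symm z)
      rw [h]; abel
    · intro x y z
      rw [hcomp]
      simp only [hps, hss, hST]
      rw [← map_add]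
      congr 1
      rw [← hβS]
      exact B2 x z (e.symm y)
    · intro x y z
      rw [hcomp]
      simp only [hps, hss, hST]
      rw [← map_add]
      congr 1
      rw [← hβS]
      exact B3 y z (e.symm x)
    · intro x y
      rw [hps, hps, O1, B5, hβS]
    · intro x y
      rw [hss, hss, O1, B4, hβS]
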